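/- Let Q be the output of the Frequent Directions algorithm run on an n×d matrix A with parameter ℓ. Then for any integer k with 1 ≤ k < ℓ, ‖Q_k‖_F² ≤ ‖A_k‖_F². -/
import Mathlib


open Matrix

/-- The squared Euclidean norm of a vector in `ℝ^m`. -/
noncomputable def sqNorm {m : ℕ} (v : Fin m → ℝ) : ℝ := ∑ i, v i ^ 2

/-- The squared Frobenius norm of a real matrix. -/
noncomputable def frobSq {m p : ℕ} (M : Matrix (Fin m) (Fin p) ℝ) : ℝ :=
  ∑ i, ∑ j, M i j ^ 2

lemma sqNorm_eq_dot {m : ℕ} (u : Fin m → ℝ) : sqNorm u = u ⬝ᵥ u := by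
  simp [sqNorm, dotProduct, sq]

lemma sqNorm_mulVec {m p : ℕ} (M : Matrix (Fin m) (Fin p) ℝ) (x : Fin p → ℝ) :
    sqNorm (M.mulVec x) = x ⬝ᵥ (Mᵀ * M).mulVec x := by
  rw [← Matrix.mulVec_mulVec, Matrix.dotProduct_mulVec, Matrix.vecMul_transpose,
    sqNorm_eq_dot]

lemma sqNorm_nonneg {m : ℕ} (u : Fin m → ℝ) : 0 ≤ sqNorm u :=
  Finset.sum_nonneg fun i _ => sq_nonneg _

lemma ortho_cols {d : ℕ} (v : Fin d → Fin d → ℝ)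
    (hv : ∀ a b, ∑ t, v a t * v b t = if a = b then 1 else 0) :
    ∀ a b : Fin d, ∑ t, v t a * v t b = if a = b then 1 else 0 := by
  have h1 : (Matrix.of v) * (Matrix.of v)ᵀ = 1 := by
    ext a b
    simpa [Matrix.mul_apply, Matrix.one_apply] using hv a b
  have h2 := mul_eq_one_comm.mp h1
  intro a b
  have := congrFun (congrFun h2 a) b
  simpa [Matrix.mul_apply, Matrix.one_apply] using this

-- Parseval: for a complete orthonormal family v, ∑_a ⟨x, v_a⟩² = ‖x‖².
lemma parseval {d : ℕ} (v : Fin d → Fin d → ℝ)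
    (hv : ∀ a b : Fin d, ∑ t, v a t * v b t = if a = b then 1 else 0)
    (x : Fin d → ℝ) : ∑ a, (∑ t, x t * v a t) ^ 2 = ∑ t, x t ^ 2 := by
  have hc := ortho_cols v hv
  calc ∑ a, (∑ t, x t * v a t) ^ 2
      = ∑ a, ∑ t, ∑ t', (x t * x t') * (v a t * v a t') := by
        refine Finset.sum_congr rfl fun a _ => ?_
        rw [sq, Finset.sum_mul_sum]
        refine Finset.sum_congr rfl fun t _ => Finset.sum_congr rfl fun t' _ => by ring
    _ = ∑ t, ∑ t', (x t * x t') * ∑ a, v a t * v a t' := by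
        rw [Finset.sum_comm]
        refine Finset.sum_congr rfl fun t _ => ?_
        rw [Finset.sum_comm]
        refine Finset.sum_congr rfl fun t' _ => ?_
        rw [Finset.mul_sum]
    _ = ∑ t, x t ^ 2 := by
        refine Finset.sum_congr rfl fun t _ => ?_
        simp only [hc]
        simp [Finset.mul_sum, mul_ite, Finset.sum_ite_eq', sq]

lemma quad_form {n d : ℕ} (A : Matrix (Fin n) (Fin d) ℝ)
    (v : Fin d → Fin d → ℝ) (lam : Fin d → ℝ)
    (hv : ∀ a b : Fin d, ∑ t, v a t * v b t = if a = b then 1 else 0)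
    (hAv : ∀ a, (Aᵀ * A).mulVec (v a) = lam a • v a)
    (x : Fin d → ℝ) :
    sqNorm (A.mulVec x) = ∑ a, lam a * (∑ t, x t * v a t) ^ 2 := by
  have hc := ortho_cols v hv
  set B := Aᵀ * A with hB
  rw [sqNorm_mulVec]
  -- expand x in the basis v
  have hx : ∀ t, x t = ∑ a, (∑ u, x u * v a u) * v a t := by
    intro t
    calc x t = ∑ u, x u * ∑ a, v a u * v a t := by
          simp only [hc]
          simp [mul_ite, Finset.sum_ite_eq', Finset.mul_sum]
      _ = ∑ u, ∑ a, x u * v a u * v a t := by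
          refine Finset.sum_congr rfl fun u _ => ?_
          rw [Finset.mul_sum]
          exact Finset.sum_congr rfl fun a _ => by ring
      _ = ∑ a, ∑ u, x u * v a u * v a t := Finset.sum_comm
      _ = ∑ a, (∑ u, x u * v a u) * v a t := by
          refine Finset.sum_congr rfl fun a _ => ?_
          rw [Finset.sum_mul]
  -- B x = ∑_a c_a lam_a v_a  (pointwise)
  have hBx : ∀ t, B.mulVec x t = ∑ a, (∑ u, x u * v a u) * (lam a * v a t) := by
    intro t
    calc B.mulVec x t = ∑ s', B t s' * x s' := rfl
      _ = ∑ s', B t s' * ∑ a, (∑ u, x u * v a u) * v a s' := by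
          refine Finset.sum_congr rfl fun s' _ => by rw [← hx s']
      _ = ∑ s', ∑ a, (∑ u, x u * v a u) * (B t s' * v a s') := by
          refine Finset.sum_congr rfl fun s' _ => ?_
          rw [Finset.mul_sum]
          exact Finset.sum_congr rfl fun a _ => by ring
      _ = ∑ a, (∑ u, x u * v a u) * ∑ s', B t s' * v a s' := by
          rw [Finset.sum_comm]
          exact Finset.sum_congr rfl fun a _ => by rw [Finset.mul_sum]
      _ = ∑ a, (∑ u, x u * v a u) * (lam a * v a t) := by
          refine Finset.sum_congr rfl fun a _ => ?_
          have : B.mulVec (v a) t = (lam a • v a) t := by rw [hAv a]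
          simpa [Matrix.mulVec, dotProduct, smul_eq_mul] using congrArg (fun z => (∑ u, x u * v a u) * z) this
  calc x ⬝ᵥ B.mulVec x = ∑ t, x t * ∑ a, (∑ u, x u * v a u) * (lam a * v a t) := by
        refine Finset.sum_congr rfl fun t _ => by rw [hBx t]
    _ = ∑ t, ∑ a, (∑ u, x u * v a u) * lam a * (x t * v a t) := by
        refine Finset.sum_congr rfl fun t _ => ?_
        rw [Finset.mul_sum]
        exact Finset.sum_congr rfl fun a _ => by ring
    _ = ∑ a, ∑ t, (∑ u, x u * v a u) * lam a * (x t * v a t) := Finset.sum_comm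
    _ = ∑ a, lam a * (∑ t, x t * v a t) ^ 2 := by
        refine Finset.sum_congr rfl fun a _ => ?_
        rw [← Finset.mul_sum, sq]
        ring


/-- Let `Q` be the output of the Frequent Directions algorithm run on an
`n × d` matrix `A` with parameter `ℓ`.  Then for any integer `k` with
`1 ≤ k < ℓ`, `‖Q_k‖_F² ≤ ‖A_k‖_F²`, where `‖A_k‖_F² = ∑_{i=1}^k ‖A v_i‖²` and
`‖Q_k‖_F² = ∑_{i=1}^k ‖Q y_i‖²` for right singular vectors `v` of `A` and `y`
of `Q`, ordered by decreasing singular values. -/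
theorem fd_sketch_norm_le
    (n d ℓ : ℕ) (hℓ : 0 < ℓ)
    (A : Matrix (Fin n) (Fin d) ℝ)
    (Q : Fin (n + 1) → Matrix (Fin ℓ) (Fin d) ℝ)
    (C : Fin n → Matrix (Fin ℓ) (Fin d) ℝ)
    (Z : Fin n → Matrix (Fin ℓ) (Fin ℓ) ℝ)
    (Y : Fin n → Matrix (Fin d) (Fin ℓ) ℝ)
    (s : Fin n → Fin ℓ → ℝ) (δ : Fin n → ℝ)
    -- the algorithm starts with the zero matrix
    (hQ0 : Q 0 = 0)
    -- `C i` is `Q^{i-1}` with its last row replaced by the `i`-th row of `A`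
    (hC : ∀ i : Fin n,
      C i = (Q i.castSucc).updateRow ⟨ℓ - 1, Nat.sub_lt hℓ Nat.one_pos⟩ (A i))
    -- a singular value decomposition `C i = Z S Yᵀ` of `C i`
    (hZ : ∀ i, (Z i)ᵀ * Z i = 1)
    (hY : ∀ i, (Y i)ᵀ * Y i = 1)
    (hSVD : ∀ i, C i = Z i * Matrix.diagonal (s i) * (Y i)ᵀ)
    (hmono : ∀ i, ∀ j j' : Fin ℓ, j ≤ j' → s i j' ≤ s i j)
    (hnn : ∀ i j, 0 ≤ s i j)
    -- `δ i` is the square of the smallest singular value of `C i`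
    (hδ : ∀ i, δ i = s i ⟨ℓ - 1, Nat.sub_lt hℓ Nat.one_pos⟩ ^ 2)
    -- the shrinking step producing `Q^i = S' Yᵀ`
    (hQs : ∀ i : Fin n,
      Q i.succ = Matrix.diagonal (fun j => Real.sqrt (s i j ^ 2 - δ i)) * (Y i)ᵀ)
    -- `v` is an orthonormal family of right singular vectors of `A`,
    -- ordered by decreasing singular values `σA`
    (v : Fin d → Fin d → ℝ) (σA : Fin d → ℝ)
    (hv : ∀ a b : Fin d, ∑ t, v a t * v b t = if a = b then 1 else 0)
    (hσmono : ∀ a b : Fin d, a ≤ b → σA b ≤ σA a)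
    (hσnn : ∀ a, 0 ≤ σA a)
    (hAv : ∀ a, (Aᵀ * A).mulVec (v a) = σA a ^ 2 • v a)
    -- `y` is an orthonormal family of right singular vectors of the output
    -- matrix `Q = Qⁿ`, ordered by decreasing singular values `τ`
    (y : Fin d → Fin d → ℝ) (τ : Fin d → ℝ)
    (hy : ∀ a b : Fin d, ∑ t, y a t * y b t = if a = b then 1 else 0)
    (hτmono : ∀ a b : Fin d, a ≤ b → τ b ≤ τ a)
    (hτnn : ∀ a, 0 ≤ τ a)
    (hQy : ∀ a, ((Q (Fin.last n))ᵀ * Q (Fin.last n)).mulVec (y a) = τ a ^ 2 • y a)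
    (k : ℕ) (hk1 : 1 ≤ k) (hk2 : k < ℓ) :
    (∑ i ∈ Finset.univ.filter (fun i : Fin d => (i : ℕ) < k),
      sqNorm ((Q (Fin.last n)).mulVec (y i))) ≤ ∑ i ∈ Finset.univ.filter (fun i : Fin d => (i : ℕ) < k), sqNorm (A.mulVec (v i)) := by
  classical
  set L : Fin ℓ := ⟨ℓ - 1, Nat.sub_lt hℓ Nat.one_pos⟩ with hL
  -- (I) the last row of every Q i is zero
  have hlast : ∀ (i : Fin (n + 1)) (c : Fin d), Q i L c = 0 := by
    intro i
    rcases Fin.eq_zero_or_eq_succ i with h0 | ⟨j, hj⟩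
    · intro c; rw [h0, hQ0]; rfl
    · intro c
      rw [hj, hQs j, Matrix.diagonal_mul]
      have hz : s j L ^ 2 - δ j = 0 := by rw [hδ j]; ring
      rw [hz]
      simp
  -- (II) replacing the (zero) last row adds one squared dot product
  have hstep1 : ∀ (i : Fin n) (x : Fin d → ℝ),
      sqNorm ((C i).mulVec x) = sqNorm ((Q i.castSucc).mulVec x) + (A i ⬝ᵥ x) ^ 2 := by
    intro i x
    have hrow : ∀ r, ((C i).mulVec x r) ^ 2
        = ((Q i.castSucc).mulVec x r) ^ 2 + (if r = L then (A i ⬝ᵥ x) ^ 2 else 0) := by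
      intro r
      by_cases hr : r = L
      · have h1 : (C i).mulVec x r = A i ⬝ᵥ x := by
          rw [hC i, hr]
          simp [Matrix.mulVec]
        have h2 : (Q i.castSucc).mulVec x r = 0 := by
          rw [hr]
          simp [Matrix.mulVec, dotProduct, hlast i.castSucc]
        rw [h1, h2]
        simp [hr]
      · have h1 : (C i).mulVec x r = (Q i.castSucc).mulVec x r := by
          rw [hC i]
          simp [Matrix.mulVec, Matrix.updateRow_ne hr]
        rw [h1]
        simp [hr]
    calc sqNorm ((C i).mulVec x)
        = ∑ r, (((Q i.castSucc).mulVec x r) ^ 2 + if r = L then (A i ⬝ᵥ x) ^ 2 else 0) :=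
          Finset.sum_congr rfl fun r _ => hrow r
      _ = _ := by rw [Finset.sum_add_distrib]; simp [sqNorm]
  -- (III) the shrinking step does not increase the quadratic form
  have hδnn : ∀ i, 0 ≤ δ i := fun i => by rw [hδ i]; positivity
  have hs2 : ∀ i j, δ i ≤ s i j ^ 2 := by
    intro i j
    rw [hδ i]
    have hj : j ≤ L := by
      rw [Fin.le_def]
      have := j.isLt
      simp only [hL]
      omega
    exact pow_le_pow_left₀ (hnn i L) (hmono i j L hj) 2
  have hstep2 : ∀ (i : Fin n) (x : Fin d → ℝ),
      sqNorm ((Q i.succ).mulVec x) ≤ sqNorm ((C i).mulVec x) := by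
    intro i x
    set u : Fin ℓ → ℝ := (Y i)ᵀ.mulVec x with hu
    have hQx : sqNorm ((Q i.succ).mulVec x) = ∑ j, (s i j ^ 2 - δ i) * u j ^ 2 := by
      rw [hQs i, ← Matrix.mulVec_mulVec]
      unfold sqNorm
      refine Finset.sum_congr rfl fun j _ => ?_
      rw [Matrix.mulVec_diagonal, mul_pow, Real.sq_sqrt (by linarith [hs2 i j])]
    have hCx : sqNorm ((C i).mulVec x) = ∑ j, s i j ^ 2 * u j ^ 2 := by
      have hw : (C i).mulVec x = (Z i).mulVec ((Matrix.diagonal (s i)).mulVec u) := by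
        rw [hSVD i, Matrix.mulVec_mulVec, Matrix.mulVec_mulVec, Matrix.mul_assoc]
      rw [hw, sqNorm_mulVec, hZ i, Matrix.one_mulVec]
      simp only [dotProduct, Matrix.mulVec_diagonal]
      exact Finset.sum_congr rfl fun j _ => by ring
    rw [hQx, hCx]
    refine Finset.sum_le_sum fun j _ => ?_
    nlinarith [sq_nonneg (u j), hδnn i]
  -- (IV) telescoping: the final quadratic form is dominated by that of A
  have htel : ∀ x : Fin d → ℝ,
      sqNorm ((Q (Fin.last n)).mulVec x) ≤ sqNorm (A.mulVec x) := by
    intro x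
    have key : ∀ m (hm : m ≤ n), sqNorm ((Q ⟨m, Nat.lt_succ_of_le hm⟩).mulVec x)
        ≤ ∑ j ∈ Finset.univ.filter (fun j : Fin n => (j : ℕ) < m), (A j ⬝ᵥ x) ^ 2 := by
      intro m
      induction m with
      | zero =>
        intro hm
        have h0 : (⟨0, Nat.lt_succ_of_le hm⟩ : Fin (n + 1)) = 0 := rfl
        rw [h0, hQ0]
        simp [sqNorm, Matrix.zero_mulVec]
      | succ m ih =>
        intro hm
        have hmn : m < n := hm
        set i : Fin n := ⟨m, hmn⟩ with hi
        have h1 : (⟨m + 1, Nat.lt_succ_of_le hm⟩ : Fin (n + 1)) = i.succ := rfl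
        have h2 : i.castSucc = (⟨m, Nat.lt_succ_of_le (le_of_lt hmn)⟩ : Fin (n + 1)) := rfl
        have hins : Finset.univ.filter (fun j : Fin n => (j : ℕ) < m + 1)
            = insert i (Finset.univ.filter (fun j : Fin n => (j : ℕ) < m)) := by
          ext j
          simp only [Finset.mem_filter, Finset.mem_univ, true_and, Finset.mem_insert,
            Fin.ext_iff, hi]
          omega
        calc sqNorm ((Q ⟨m + 1, Nat.lt_succ_of_le hm⟩).mulVec x)
            = sqNorm ((Q i.succ).mulVec x) := by rw [h1]
          _ ≤ sqNorm ((C i).mulVec x) := hstep2 i x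
          _ = sqNorm ((Q i.castSucc).mulVec x) + (A i ⬝ᵥ x) ^ 2 := hstep1 i x
          _ ≤ (∑ j ∈ Finset.univ.filter (fun j : Fin n => (j : ℕ) < m), (A j ⬝ᵥ x) ^ 2)
              + (A i ⬝ᵥ x) ^ 2 := by
                have := ih (le_of_lt hmn)
                rw [h2] at *
                linarith [this]
          _ = ∑ j ∈ Finset.univ.filter (fun j : Fin n => (j : ℕ) < m + 1), (A j ⬝ᵥ x) ^ 2 := by
                rw [hins, Finset.sum_insert (by simp [hi])]
                ring
    have h3 := key n le_rfl
    have h4 : Finset.univ.filter (fun j : Fin n => (j : ℕ) < n) = Finset.univ := by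
      ext j; simp [j.isLt]
    have h5 : (⟨n, Nat.lt_succ_of_le le_rfl⟩ : Fin (n + 1)) = Fin.last n := rfl
    rw [h5, h4] at h3
    exact h3.trans_eq (by rfl)
  -- (V) combine with the spectral argument
  have hAy : ∀ x, sqNorm (A.mulVec x) = ∑ a, σA a ^ 2 * (∑ t, x t * v a t) ^ 2 :=
    quad_form A v (fun a => σA a ^ 2) hv hAv
  have hAva : ∀ a, sqNorm (A.mulVec (v a)) = σA a ^ 2 := by
    intro a
    rw [hAy]
    simp only [hv a]
    simp [apply_ite (fun z : ℝ => z ^ 2), mul_ite, Finset.sum_ite_eq]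
  set F := Finset.univ.filter (fun i : Fin d => (i : ℕ) < k) with hF
  refine le_trans (Finset.sum_le_sum fun i _ => htel (y i)) ?_
  set w : Fin d → ℝ := fun a => ∑ i ∈ F, (∑ t, y i t * v a t) ^ 2 with hwdef
  set χ : Fin d → ℝ := fun a => if (a : ℕ) < k then 1 else 0 with hχ
  have hlhs : ∑ i ∈ F, sqNorm (A.mulVec (y i)) = ∑ a, σA a ^ 2 * w a := by
    calc ∑ i ∈ F, sqNorm (A.mulVec (y i))
        = ∑ i ∈ F, ∑ a, σA a ^ 2 * (∑ t, y i t * v a t) ^ 2 :=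
          Finset.sum_congr rfl fun i _ => hAy (y i)
      _ = ∑ a, ∑ i ∈ F, σA a ^ 2 * (∑ t, y i t * v a t) ^ 2 := Finset.sum_comm
      _ = ∑ a, σA a ^ 2 * w a := by
          refine Finset.sum_congr rfl fun a _ => ?_
          rw [hwdef, Finset.mul_sum]
  have hrhs : ∑ a ∈ F, sqNorm (A.mulVec (v a)) = ∑ a, χ a * σA a ^ 2 := by
    rw [hF, Finset.sum_filter]
    refine Finset.sum_congr rfl fun a _ => ?_
    by_cases h : (a : ℕ) < k <;> simp [hχ, h, hAva a]
  rw [hlhs, hrhs]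
  have hw0 : ∀ a, 0 ≤ w a := fun a => Finset.sum_nonneg fun _ _ => sq_nonneg _
  have hw1 : ∀ a, w a ≤ 1 := by
    intro a
    have hfull : ∑ i, (∑ t, y i t * v a t) ^ 2 = 1 := by
      have h2 : ∑ t, v a t ^ 2 = 1 := by simpa [sq] using hv a a
      calc ∑ i, (∑ t, y i t * v a t) ^ 2
          = ∑ i, (∑ t, v a t * y i t) ^ 2 := by
            refine Finset.sum_congr rfl fun i _ => ?_
            congr 1
            exact Finset.sum_congr rfl fun t _ => mul_comm _ _
        _ = 1 := by rw [parseval y hy (v a), h2]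
    calc w a ≤ ∑ i, (∑ t, y i t * v a t) ^ 2 :=
          Finset.sum_le_sum_of_subset_of_nonneg (Finset.subset_univ F)
            (fun i _ _ => sq_nonneg _)
      _ = 1 := hfull
  have hwsum : ∑ a, w a = ∑ a, χ a := by
    have hsum1 : ∀ i : Fin d, ∑ a, (∑ t, y i t * v a t) ^ 2 = 1 := by
      intro i
      rw [parseval v hv (y i)]
      simpa [sq] using hy i i
    calc ∑ a, w a = ∑ i ∈ F, ∑ a, (∑ t, y i t * v a t) ^ 2 := Finset.sum_comm
      _ = ∑ i ∈ F, 1 := Finset.sum_congr rfl fun i _ => hsum1 i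
      _ = (F.card : ℝ) := by simp
      _ = ∑ a, χ a := by
          rw [hχ, Finset.sum_boole, hF]
  set t0 : ℝ := if h : k < d then σA ⟨k, h⟩ ^ 2 else 0 with ht0
  have hterm : ∀ a : Fin d, (σA a ^ 2 - t0) * (w a - χ a) ≤ 0 := by
    intro a
    by_cases hak : (a : ℕ) < k
    · have hχa : χ a = 1 := by simp [hχ, hak]
      have h1 : t0 ≤ σA a ^ 2 := by
        rw [ht0]
        split_ifs with h
        · refine pow_le_pow_left₀ (hσnn _) (hσmono a ⟨k, h⟩ ?_) 2
          rw [Fin.le_def]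
          simpa using le_of_lt hak
        · positivity
      exact mul_nonpos_iff.mpr (Or.inl ⟨by linarith, by linarith [hw1 a, hχa.ge]⟩)
    · have hkd : k < d := lt_of_le_of_lt (not_lt.mp hak) a.isLt
      have hχa : χ a = 0 := by simp [hχ, hak]
      have h1 : σA a ^ 2 ≤ t0 := by
        rw [ht0, dif_pos hkd]
        refine pow_le_pow_left₀ (hσnn a) (hσmono ⟨k, hkd⟩ a ?_) 2
        rw [Fin.le_def]
        simpa using not_lt.mp hak
      exact mul_nonpos_iff.mpr (Or.inr ⟨by linarith, by rw [hχa]; simpa using hw0 a⟩)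
  have hdiff : ∑ a, σA a ^ 2 * w a - ∑ a, χ a * σA a ^ 2
      = (∑ a, (σA a ^ 2 - t0) * (w a - χ a)) + t0 * ∑ a, (w a - χ a) := by
    rw [Finset.mul_sum, ← Finset.sum_add_distrib, ← Finset.sum_sub_distrib]
    exact Finset.sum_congr rfl fun a _ => by ring
  have hz : ∑ a, (w a - χ a) = 0 := by
    rw [Finset.sum_sub_distrib, hwsum, sub_self]
  have hnp : ∑ a, (σA a ^ 2 - t0) * (w a - χ a) ≤ 0 :=
    Finset.sum_nonpos fun a _ => hterm a
  rw [hz, mul_zero, add_zero] at hdiff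
  linarith
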